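/- For all integers g ≥ 0 and b ≥ 0 there exist a connected closed 3-colored graph G with colors {0,1,2} which is a Feynman graph of the quartic complex matrix model, with Euler characteristic χ(G) = 2 − 2g, and b pairwise distinct color-0 edges e₁, …, e_b of G, such that the boundary graph of the open graph obtained from G by deleting e₁, …, e_b has exactly b connected components, the i-th component consisting of the two endpoints of e_i joined by one edge of color 1 and one edge of color 2. (This is the combinatorial content of the theorem that the Feynman graphs of the quartic complex matrix model surject onto all orientable 2-dimensional bordisms: such a graph represents a genus-g bordism with b boundary circles.) -/

import Mathlib

/-!  Closed colored graphs (colored tensor model / matrix model Feynman graphs). -/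

/-- A closed `D`-colored graph: a finite set `W` of white vertices, a finite set `B`
of black vertices, and for each color `c : Fin D` a bijection `σ c : W ≃ B`;
the color-`c` edges are the pairs `(w, σ c w)`. -/
structure CGraph (D : ℕ) where
  W : Type
  B : Type
  finW : Finite W
  finB : Finite B
  σ : Fin D → W ≃ B

namespace CGraph

variable {D : ℕ}

/-- The permutation `σ_d⁻¹ ∘ σ_c` of the white vertices. Its orbits are the
(cd)-bicolored faces. -/
def biperm (G : CGraph D) (c d : Fin D) : Equiv.Perm G.W :=
  (G.σ c).trans (G.σ d).symm

/-- The "same cycle" setoid of a permutation. -/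
def cycleSetoid {α : Type*} (π : Equiv.Perm α) : Setoid α where
  r := π.SameCycle
  iseqv := ⟨fun _ => ⟨0, by simp⟩, fun h => h.symm, fun h h' => h.trans h'⟩

/-- The number of cycles (orbits) of a permutation. -/
noncomputable def numCycles {α : Type*} (π : Equiv.Perm α) : ℕ :=
  Nat.card (Quotient (cycleSetoid π))

/-- Total number of bicolored faces of a closed 3-colored graph
(over the three pairs of colors). -/
noncomputable def faces (G : CGraph 3) : ℕ :=
  numCycles (G.biperm 0 1) + numCycles (G.biperm 0 2) + numCycles (G.biperm 1 2)

/-- Euler characteristic of a closed 3-colored graph: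
`χ(G) = #vertices − #edges + #faces = 2|W| − 3|W| + F(G)`. -/
noncomputable def euler (G : CGraph 3) : ℤ :=
  2 * (Nat.card G.W : ℤ) - 3 * (Nat.card G.W : ℤ) + (faces G : ℤ)

/-- Connectedness: the subgroup generated by all the permutations `σ_d⁻¹ ∘ σ_c`
acts transitively on the white vertices. -/
def Connected (G : CGraph D) : Prop :=
  ∀ v w : G.W,
    ∃ π ∈ Subgroup.closure {π : Equiv.Perm G.W | ∃ c d : Fin D, π = G.biperm c d}, π v = w

/-- The number of white vertices in the (cd)-bicolored face through `v`
(the face itself has twice as many vertices). -/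
noncomputable def faceSize (G : CGraph 3) (c d : Fin 3) (v : G.W) : ℕ :=
  Nat.card {w : G.W // (G.biperm c d).SameCycle v w}

/-- A closed 3-colored graph with colors `{0,1,2}` is a Feynman graph of the quartic
complex matrix model iff every (12)-bicolored face has exactly 4 vertices, i.e. every
orbit of `σ₂⁻¹ ∘ σ₁` has exactly 2 elements. -/
def QuarticFeynman (G : CGraph 3) : Prop :=
  ∀ v : G.W, G.faceSize 1 2 v = 2

end CGraph
/-!  Open colored graphs. -/

/-- An open `(D+1)`-colored graph with colors `{0,1,…,D}`: finite sets `W` (white) and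
`B` (black) of vertices, bijections `σ c : W ≃ B` for the colors `c = 1,…,D` (indexed by
`Fin D`), and color-0 data: subsets `W₀ ⊆ W` and `B₀ ⊆ B` and a map `σ₀` which (for a
proper graph, see `OGraph.IsProper`) restricts to a bijection from `W₀` onto `B₀`; the
color-0 edges are the pairs `(w, σ₀ w)` with `w ∈ W₀`.  The vertices outside `W₀ ∪ B₀`
are the external vertices. -/
structure OGraph (D : ℕ) where
  W : Type
  B : Type
  finW : Finite W
  finB : Finite B
  σ : Fin D → W ≃ B
  W₀ : Set W
  B₀ : Set B
  σ₀ : W → B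

namespace OGraph

variable {D : ℕ}

/-- The color-0 data is a bijection from `W₀` onto `B₀`. -/
def IsProper (G : OGraph D) : Prop := Set.BijOn G.σ₀ G.W₀ G.B₀

/-- A closed graph is an open graph with no external vertices. -/
def IsClosed (G : OGraph D) : Prop := G.W₀ = Set.univ ∧ G.B₀ = Set.univ

/-- One step along a (0c)-bicolored path: from the white vertex `w` walk along the
color-`c` edge to `σ_c w` and then back along a color-0 edge to the white vertex `w'`. -/
def Step (G : OGraph D) (c : Fin D) (w w' : G.W) : Prop :=
  w' ∈ G.W₀ ∧ G.σ c w ∈ G.B₀ ∧ G.σ₀ w' = G.σ c w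

/-- Boundary adjacency (the color-`c` edges of the boundary graph `∂G`): the external
vertices `w` and `b` are the two endpoints of a maximal (0c)-bicolored path of `G`. -/
def BdryAdj (G : OGraph D) (c : Fin D) (w : G.W) (b : G.B) : Prop :=
  w ∉ G.W₀ ∧ b ∉ G.B₀ ∧
    ∃ w' : G.W, Relation.ReflTransGen (G.Step c) w w' ∧ G.σ c w' = b

/-- Adjacency of vertices of an open colored graph (an edge of any color joins them). -/
def Adj (G : OGraph D) : G.W ⊕ G.B → G.W ⊕ G.B → Prop
  | Sum.inl w, Sum.inr b => (∃ c, G.σ c w = b) ∨ (w ∈ G.W₀ ∧ G.σ₀ w = b)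
  | Sum.inr b, Sum.inl w => (∃ c, G.σ c w = b) ∨ (w ∈ G.W₀ ∧ G.σ₀ w = b)
  | Sum.inl _, Sum.inl _ => False
  | Sum.inr _, Sum.inr _ => False

/-- A graph is connected if any two of its vertices are joined by a path of edges. -/
def Connected (G : OGraph D) : Prop :=
  ∀ x y : G.W ⊕ G.B, Relation.ReflTransGen G.Adj x y

/-- An open 4-colored graph (colors `{0,1,2,3}`; the colors `1,2,3` are indexed by
`Fin 3`) is a Feynman graph of the φ₃⁴-theory iff every connected component of the
3-colored graph obtained by deleting all color-0 edges is one of the quartic vertices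
`V₁, V₂, V₃`: the white vertices pair up, `w` with a partner `w' ≠ w`, so that for some
color `i` the two edges at `w` of the colors `j ≠ i` end at the same black vertex as the
color-`i` edge of `w'`, and vice versa. -/
def Phi34 (G : OGraph 3) : Prop :=
  ∀ w : G.W, ∃ i : Fin 3, ∃ w' : G.W, w' ≠ w ∧
    (∀ j : Fin 3, j ≠ i → G.σ j w = G.σ i w') ∧
    (∀ j : Fin 3, j ≠ i → G.σ j w' = G.σ i w)

/-- Connected sum of two open `(D+1)`-colored graphs along the color-0 edges
`(wg, σ₀ wg)` of `G` and `(wh, σ₀ wh)` of `H`: delete the two edges and add the color-0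
edges `(wg, H.σ₀ wh)` and `(wh, G.σ₀ wg)`; all other edges are kept. -/
noncomputable def connSum0 (G H : OGraph D) (wg : G.W) (wh : H.W) : OGraph D where
  W := G.W ⊕ H.W
  B := G.B ⊕ H.B
  finW := by haveI := G.finW; haveI := H.finW; exact inferInstance
  finB := by haveI := G.finB; haveI := H.finB; exact inferInstance
  σ := fun c => (G.σ c).sumCongr (H.σ c)
  W₀ := Sum.inl '' G.W₀ ∪ Sum.inr '' H.W₀
  B₀ := Sum.inl '' G.B₀ ∪ Sum.inr '' H.B₀
  σ₀ := fun x =>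
    letI : DecidableEq (G.W ⊕ H.W) := Classical.decEq _
    if x = Sum.inl wg then Sum.inr (H.σ₀ wh)
    else if x = Sum.inr wh then Sum.inl (G.σ₀ wg)
    else Sum.map G.σ₀ H.σ₀ x

end OGraph

/-- The open 3-colored graph (colors `{0,1,2}`, the nonzero colors `1,2` indexed by
`Fin 2` via `c ↦ c+1`) obtained from a closed 3-colored graph `G` by deleting the
color-0 edges `e_i = (v i, σ₀ (v i))`, `i = 1,…,b`; their endpoints become external. -/
def CGraph.deleteZero (G : CGraph 3) {b : ℕ} (v : Fin b → G.W) : OGraph 2 where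
  W := G.W
  B := G.B
  finW := G.finW
  finB := G.finB
  σ := fun c => G.σ c.succ
  W₀ := (Set.range v)ᶜ
  B₀ := (Set.range fun i => G.σ 0 (v i))ᶜ
  σ₀ := fun w => G.σ 0 w


/-!
The graphs are assembled by connected sums along color-0 edges from a four-vertex sphere and a
four-vertex torus. A connected sum composes the (01)- and (02)-face permutations of the disjoint
union with a transposition between two of their cycles, which merges these two cycles; hence
`χ (G # H) = χ G + χ H - 2`. A sphere with one marked color-0 edge, whose (01)- and (02)-faces
have four vertices, contributes one boundary circle: connected sums away from the marked edges
preserve these faces, and deleting a marked edge then leaves exactly one color-1 and one color-2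
boundary edge between its endpoints.
-/

namespace Equiv.Perm

open CGraph

variable {α β : Type*}

theorem numCycles_eq_card_of_invariant {I : Type*} (π : Perm α) (f : α → I)
    (hf : ∀ x, f (π x) = f x) (hsep : ∀ x y, f x = f y → π.SameCycle x y)
    (hsurj : Function.Surjective f) : numCycles π = Nat.card I := by
  have hzpow (z : ℤ) : ∀ x, f ((π ^ z) x) = f x := by
    induction z using Int.induction_on with
    | zero => simp
    | succ n ih => intro x; rw [zpow_add_one, mul_apply, ih, hf]
    | pred n ih =>
      intro x
      rw [zpow_sub_one, mul_apply, ih, ← hf, ← mul_apply, mul_inv_cancel, one_apply]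
  have hlift (x y : α) : π.SameCycle x y → f x = f y := by
    rintro ⟨z, rfl⟩
    exact (hzpow z x).symm
  exact Nat.card_congr <| Equiv.ofBijective (Quotient.lift f hlift)
    ⟨Quotient.ind₂ fun x y h => Quotient.sound (hsep x y h),
      fun i => (hsurj i).elim fun x hx => ⟨⟦x⟧, hx⟩⟩

section SumCongr

theorem sumCongr_zpow (π : Perm α) (θ : Perm β) (z : ℤ) :
    π.sumCongr θ ^ z = (π ^ z).sumCongr (θ ^ z) :=
  (map_zpow (sumCongrHom α β) (π, θ) z).symm

variable {π : Perm α} {θ : Perm β}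

theorem sameCycle_sumCongr_inl {x y : α} :
    (π.sumCongr θ).SameCycle (Sum.inl x) (Sum.inl y) ↔ π.SameCycle x y := by
  simp [SameCycle, sumCongr_zpow]

theorem sameCycle_sumCongr_inr {x y : β} :
    (π.sumCongr θ).SameCycle (Sum.inr x) (Sum.inr y) ↔ θ.SameCycle x y := by
  simp [SameCycle, sumCongr_zpow]

theorem not_sameCycle_sumCongr_inl_inr (x : α) (y : β) :
    ¬(π.sumCongr θ).SameCycle (Sum.inl x) (Sum.inr y) := by
  simp [SameCycle, sumCongr_zpow]

theorem numCycles_sumCongr [Finite α] [Finite β] (π : Perm α) (θ : Perm β) :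
    numCycles (π.sumCongr θ) = numCycles π + numCycles θ := by
  rw [numCycles_eq_card_of_invariant _ (Sum.map (Quotient.mk (cycleSetoid π))
    (Quotient.mk (cycleSetoid θ))), Nat.card_sum]
  · rfl
  · rintro (x | x) <;> simp only [sumCongr_apply, Sum.map_inl, Sum.map_inr] <;>
      exact congrArg _ (Quotient.sound (sameCycle_apply_left.mpr (SameCycle.refl _ _)))
  · rintro (x | x) (y | y) h <;> simp only [Sum.map_inl, Sum.map_inr, reduceCtorEq,
      Sum.inl.injEq, Sum.inr.injEq] at h
    · exact sameCycle_sumCongr_inl.mpr (Quotient.exact h)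
    · exact sameCycle_sumCongr_inr.mpr (Quotient.exact h)
  · exact Sum.map_surjective.mpr ⟨Quotient.mk_surjective, Quotient.mk_surjective⟩

end SumCongr

theorem card_sameCycle_of_involutive [Finite α] {π : Perm α} (hinv : Function.Involutive π)
    (hfree : ∀ w, π w ≠ w) (v : α) : Nat.card {w // π.SameCycle v w} = 2 := by
  have hcycle (n : ℕ) : (π ^ n) v = v ∨ (π ^ n) v = π v := by
    induction n with
    | zero => simp
    | succ n ih => rcases ih with ih | ih <;> simp [pow_succ', ih, hinv v]
  refine Nat.card_eq_two_iff.mpr ⟨⟨v, .refl _ _⟩, ⟨π v, .symm (sameCycle_apply_left.mpr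
    (.refl _ _))⟩, fun he => hfree v (congrArg Subtype.val he).symm, ?_⟩
  ext ⟨w, hw⟩
  obtain ⟨n, -, rfl⟩ := hw.exists_pow_eq'
  rcases hcycle n with h | h <;> simp [Subtype.ext_iff, h]

section MulSwap

variable [Finite α] [DecidableEq α] {ρ : Perm α} {x y : α}

/-- If `y` were not in the cycle of `x`, the `(ρ * swap x y)`-orbit of `ρ y = (ρ * swap x y) x`
would be closed under `ρ`, hence would contain `y`. -/
theorem sameCycle_mul_swap (h : ¬ρ.SameCycle x y) : (ρ * swap x y).SameCycle x y := by
  by_contra hxy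
  have hiter (n : ℕ) : (ρ * swap x y).SameCycle x ((ρ ^ n) (ρ y)) := by
    induction n with
    | zero => exact ⟨1, by simp⟩
    | succ n ih =>
      have hy : ρ.SameCycle y ((ρ ^ n) (ρ y)) :=
        (sameCycle_apply_left.mpr (SameCycle.refl _ _)).symm.trans ⟨n, by simp⟩
      have hnx : (ρ ^ n) (ρ y) ≠ x := fun he => h (he ▸ hy).symm
      have hny : (ρ ^ n) (ρ y) ≠ y := fun he => hxy (by rwa [he] at ih)
      rw [pow_succ', mul_apply, ← swap_apply_of_ne_of_ne hnx hny, ← mul_apply]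
      exact sameCycle_apply_right.mpr ih
  obtain ⟨n, -, hn⟩ := (sameCycle_apply_left.mpr (SameCycle.refl ρ y)).exists_pow_eq'
  have hy := hiter n
  rw [hn] at hy
  exact hxy hy

theorem SameCycle.mul_swap (h : ¬ρ.SameCycle x y) {u v : α} (huv : ρ.SameCycle u v) :
    (ρ * swap x y).SameCycle u v := by
  have hstep (w : α) : (ρ * swap x y).SameCycle w (ρ w) := by
    by_cases hwx : w = x
    · subst hwx
      simpa using (sameCycle_mul_swap h).trans (SameCycle.refl _ _ |>.apply_right)
    by_cases hwy : w = y
    · subst hwy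
      simpa using (sameCycle_mul_swap h).symm.trans (SameCycle.refl _ _ |>.apply_right)
    simpa [swap_apply_of_ne_of_ne hwx hwy] using (SameCycle.refl (ρ * swap x y) w).apply_right
  obtain ⟨n, -, rfl⟩ := huv.exists_pow_eq'
  clear huv
  induction n with
  | zero => exact SameCycle.refl _ _
  | succ n ih => rw [pow_succ', mul_apply]; exact ih.trans (hstep _)

theorem numCycles_mul_swap (h : ¬ρ.SameCycle x y) :
    numCycles (ρ * swap x y) + 1 = numCycles ρ := by
  classical
  set q : α → Quotient (cycleSetoid ρ) := Quotient.mk _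
  have hq {u v : α} : q u = q v ↔ ρ.SameCycle u v := Quotient.eq
  -- the cycles of `ρ * swap x y` are those of `ρ`, with the cycles of `x` and `y` merged
  let g (w : α) : Quotient (cycleSetoid ρ) := if ρ.SameCycle w y then q x else q w
  have hg (w : α) : g w ≠ q y := by
    unfold g; split_ifs with hw
    · exact fun he => h (hq.mp he)
    · exact fun he => hw (hq.mp he)
  have hA {u v : α} : ρ.SameCycle u v → (ρ * swap x y).SameCycle u v := SameCycle.mul_swap h
  have hmixed {u v : α} (hu : ρ.SameCycle u y) (hv : ¬ρ.SameCycle v y) (huv : g u = g v) :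
      (ρ * swap x y).SameCycle u v := by
    simp only [g, hu, hv, if_true, if_false] at huv
    exact (hA hu).trans ((sameCycle_mul_swap h).symm.trans (hA (hq.mp huv)))
  rw [numCycles_eq_card_of_invariant (ρ * swap x y)
    (fun w => (⟨g w, hg w⟩ : ({q y}ᶜ : Set _)))]
  · rw [Nat.card_coe_set_eq, numCycles, ← Set.ncard_add_ncard_compl {q y}, Set.ncard_singleton,
      add_comm]
  · have hqρ (w : α) : q (ρ w) = q w := hq.mpr (sameCycle_apply_left.mpr (SameCycle.refl ρ w))
    intro w
    ext1
    by_cases hwx : w = x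
    · rw [hwx]
      simp [g, sameCycle_apply_left.mpr (SameCycle.refl ρ y)]
    by_cases hwy : w = y
    · have hρx : ¬ρ.SameCycle (ρ x) y := fun he => h (sameCycle_apply_left.mp he)
      rw [hwy]
      simp [g, hρx, hqρ, SameCycle.refl ρ y]
    simp [g, swap_apply_of_ne_of_ne hwx hwy, hqρ]
  · intro u v huv
    replace huv : g u = g v := congrArg Subtype.val huv
    by_cases hu : ρ.SameCycle u y <;> by_cases hv : ρ.SameCycle v y
    · exact hA (hu.trans hv.symm)
    · exact hmixed hu hv huv
    · exact (hmixed hv hu huv.symm).symm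
    · simp only [g, hu, hv, if_false] at huv
      exact hA (hq.mp huv)
  · rintro ⟨p, hp⟩
    induction p using Quotient.ind with | _ w => ?_
    have hw : ¬ρ.SameCycle w y := fun hw => hp (hq.mpr hw)
    exact ⟨w, by simp [g, hw, q]⟩

end MulSwap

section AddRight

variable {A : Type*} [AddCommGroup A]

theorem addRight_zpow_apply (a x : A) (z : ℤ) : (Equiv.addRight a ^ z) x = x + z • a := by
  revert x
  induction z using Int.induction_on with
  | zero => simp
  | succ n ih => intro x; rw [zpow_add_one, mul_apply, ih]; simp [add_smul]; abel
  | pred n ih => intro x; rw [zpow_sub_one, mul_apply, ih]; simp [sub_smul]; abel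

/-- The cycles of a translation `x ↦ x + a` are the cosets of `ℤ • a`. -/
theorem numCycles_addRight_mul_addOrderOf [Finite A] (a : A) :
    numCycles (Equiv.addRight a) * addOrderOf a = Nat.card A := by
  rw [numCycles_eq_card_of_invariant _ (QuotientAddGroup.mk : A → A ⧸ AddSubgroup.zmultiples a),
    ← Nat.card_zmultiples, mul_comm]
  · exact (AddSubgroup.zmultiples a).card_mul_index
  · intro x
    exact QuotientAddGroup.eq.mpr ⟨-1, by simp⟩
  · intro x y h
    obtain ⟨z, hz⟩ := QuotientAddGroup.eq.mp h
    exact ⟨z, by rw [addRight_zpow_apply, show z • a = -x + y from hz]; abel⟩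
  · exact QuotientAddGroup.mk_surjective

theorem numCycles_addRight_mul_eq_card [Finite A] {a : A} {k : ℕ} (hk : 0 < k)
    (h : k • a = 0 ∧ ∀ m < k, 0 < m → m • a ≠ 0) :
    numCycles (Equiv.addRight a) * k = Nat.card A := by
  rw [← (addOrderOf_eq_iff hk).mpr h]
  exact numCycles_addRight_mul_addOrderOf a

end AddRight

end Equiv.Perm

namespace CGraph

open Equiv Equiv.Perm

variable {D : ℕ}

theorem biperm_self (G : CGraph D) (c : Fin D) : G.biperm c c = 1 := by
  ext; simp [biperm]

theorem biperm_apply_biperm (G : CGraph D) (c d e : Fin D) (w : G.W) :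
    G.biperm d e (G.biperm c d w) = G.biperm c e w := by
  simp [biperm]

theorem quarticFeynman_of_involutive {G : CGraph 3} (hinv : Function.Involutive (G.biperm 1 2))
    (hfree : ∀ w, G.biperm 1 2 w ≠ w) : G.QuarticFeynman :=
  have := G.finW
  card_sameCycle_of_involutive hinv hfree

-- `G.Connected` unfolds to `∀ v w, G.Linked v w`.
def Linked (G : CGraph D) (v w : G.W) : Prop :=
  ∃ π ∈ Subgroup.closure {π : Perm G.W | ∃ c d : Fin D, π = G.biperm c d}, π v = w

namespace Linked

variable {G : CGraph D} {u v w : G.W}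

@[refl] theorem refl (v : G.W) : G.Linked v v := ⟨1, one_mem _, rfl⟩

theorem symm : G.Linked v w → G.Linked w v := by
  rintro ⟨π, hπ, rfl⟩
  exact ⟨π⁻¹, inv_mem hπ, by simp⟩

theorem trans : G.Linked u v → G.Linked v w → G.Linked u w := by
  rintro ⟨π, hπ, rfl⟩ ⟨π', hπ', rfl⟩
  exact ⟨π' * π, mul_mem hπ' hπ, rfl⟩

theorem of_sameCycle {c d : Fin D} (h : (G.biperm c d).SameCycle v w) : G.Linked v w := by
  obtain ⟨z, rfl⟩ := h
  have hgen : G.biperm c d ∈ {π : Perm G.W | ∃ c d : Fin D, π = G.biperm c d} := ⟨c, d, rfl⟩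
  exact ⟨G.biperm c d ^ z, zpow_mem (Subgroup.subset_closure hgen) z, rfl⟩

/-- It suffices to follow the generators `biperm 0 c`, as
`biperm c d = biperm 0 d * (biperm 0 c)⁻¹`. -/
theorem map {E : ℕ} {G : CGraph (D + 1)} {K : CGraph E} (e : G.W → K.W)
    (he : ∀ c u, K.Linked (e u) (e (G.biperm 0 c u))) {v w : G.W} (h : G.Linked v w) :
    K.Linked (e v) (e w) := by
  obtain ⟨π, hπ, rfl⟩ := h
  induction hπ using Subgroup.closure_induction generalizing v with
  | mem π hπ =>
    obtain ⟨c, d, rfl⟩ := hπ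
    obtain ⟨u, rfl⟩ := (G.biperm 0 c).surjective v
    rw [biperm_apply_biperm]
    exact (he c u).symm.trans (he d u)
  | one => rfl
  | mul π π' _ _ ih ih' => exact (ih' (v := v)).trans (ih (v := π' v))
  | inv π _ ih => simpa using (ih (v := π⁻¹ v)).symm

end Linked

section ConnSum

open Classical

/-- The connected sum along the color-0 edges at `x` and `y`: they are replaced by color-0 edges
from `x` to `H.σ 0 y` and from `y` to `G.σ 0 x`. -/
noncomputable abbrev connSum (G H : CGraph (D + 1)) (x : G.W) (y : H.W) : CGraph (D + 1) where
  W := G.W ⊕ H.W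
  B := G.B ⊕ H.B
  finW := have := G.finW; have := H.finW; inferInstance
  finB := have := G.finB; have := H.finB; inferInstance
  σ c := if c = 0 then (swap (Sum.inl x) (Sum.inr y)).trans ((G.σ c).sumCongr (H.σ c))
    else (G.σ c).sumCongr (H.σ c)

section

variable (G H : CGraph (D + 1)) (x : G.W) (y : H.W)

theorem biperm_connSum_zero {c : Fin (D + 1)} (hc : c ≠ 0) :
    (G.connSum H x y).biperm 0 c =
      (G.biperm 0 c).sumCongr (H.biperm 0 c) * swap (Sum.inl x) (Sum.inr y) := by
  simp only [biperm, connSum, hc, if_true, if_false, Equiv.sumCongr_symm]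
  rw [Equiv.trans_assoc, Equiv.sumCongr_trans]
  rfl

theorem biperm_connSum_zero_apply {c : Fin (D + 1)} (hc : c ≠ 0) (p : G.W ⊕ H.W) :
    (G.connSum H x y).biperm 0 c p =
      Sum.map (G.biperm 0 c) (H.biperm 0 c) (swap (Sum.inl x) (Sum.inr y) p) := by
  rw [biperm_connSum_zero G H x y hc]
  rfl

theorem biperm_connSum_of_ne_zero {c d : Fin (D + 1)} (hc : c ≠ 0) (hd : d ≠ 0) :
    (G.connSum H x y).biperm c d = (G.biperm c d).sumCongr (H.biperm c d) := by
  ext w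
  simp [biperm, connSum, hc, hd]

theorem sameCycle_biperm_connSum_zero {c : Fin (D + 1)} (hc : c ≠ 0) {p q : G.W ⊕ H.W}
    (h : ((G.biperm 0 c).sumCongr (H.biperm 0 c)).SameCycle p q) :
    ((G.connSum H x y).biperm 0 c).SameCycle p q := by
  have := G.finW; have := H.finW
  rw [biperm_connSum_zero G H x y hc]
  exact h.mul_swap (not_sameCycle_sumCongr_inl_inr x y)

theorem sameCycle_biperm_connSum_inl_inr {c : Fin (D + 1)} (hc : c ≠ 0) :
    ((G.connSum H x y).biperm 0 c).SameCycle (Sum.inl x) (Sum.inr y) := by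
  have := G.finW; have := H.finW
  rw [biperm_connSum_zero G H x y hc]
  exact sameCycle_mul_swap (not_sameCycle_sumCongr_inl_inr x y)

end

theorem Connected.connSum {G H : CGraph (D + 2)} (hG : G.Connected) (hH : H.Connected)
    (x : G.W) (y : H.W) : (G.connSum H x y).Connected := by
  have hinl (c : Fin (D + 2)) (u : G.W) :
      (G.connSum H x y).Linked (Sum.inl u) (Sum.inl (G.biperm 0 c u)) := by
    rcases eq_or_ne c 0 with rfl | hc
    · rw [biperm_self]; rfl
    · exact .of_sameCycle (sameCycle_biperm_connSum_zero G H x y hc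
        (sameCycle_sumCongr_inl.mpr (sameCycle_apply_right.mpr (.refl _ _))))
  have hinr (c : Fin (D + 2)) (u : H.W) :
      (G.connSum H x y).Linked (Sum.inr u) (Sum.inr (H.biperm 0 c u)) := by
    rcases eq_or_ne c 0 with rfl | hc
    · rw [biperm_self]; rfl
    · exact .of_sameCycle (sameCycle_biperm_connSum_zero G H x y hc
        (sameCycle_sumCongr_inr.mpr (sameCycle_apply_right.mpr (.refl _ _))))
  have hbridge : (G.connSum H x y).Linked (Sum.inl x) (Sum.inr y) :=
    .of_sameCycle (sameCycle_biperm_connSum_inl_inr G H x y (c := 1) (by simp))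
  suffices h : ∀ p, (G.connSum H x y).Linked p (Sum.inl x) from fun p q => (h p).trans (h q).symm
  rintro (u | u)
  · exact Linked.map (K := G.connSum H x y) Sum.inl hinl (hG u x)
  · exact (Linked.map (K := G.connSum H x y) Sum.inr hinr (hH u y)).trans hbridge.symm

theorem numCycles_biperm_connSum_zero {G H : CGraph 3} (x : G.W) (y : H.W) {c : Fin 3}
    (hc : c ≠ 0) : numCycles ((G.connSum H x y).biperm 0 c) + 1 =
      numCycles (G.biperm 0 c) + numCycles (H.biperm 0 c) := by
  have := G.finW; have := H.finW
  rw [biperm_connSum_zero G H x y hc, ← numCycles_sumCongr]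
  exact numCycles_mul_swap (not_sameCycle_sumCongr_inl_inr x y)

theorem euler_connSum (G H : CGraph 3) (x : G.W) (y : H.W) :
    (G.connSum H x y).euler = G.euler + H.euler - 2 := by
  have := G.finW; have := H.finW
  have h01 := numCycles_biperm_connSum_zero x y (c := 1) (by decide)
  have h02 := numCycles_biperm_connSum_zero x y (c := 2) (by decide)
  have h12 : numCycles ((G.connSum H x y).biperm 1 2) =
      numCycles (G.biperm 1 2) + numCycles (H.biperm 1 2) := by
    rw [biperm_connSum_of_ne_zero G H x y (by decide) (by decide), numCycles_sumCongr]
  have hW : Nat.card (G.connSum H x y).W = Nat.card G.W + Nat.card H.W := Nat.card_sum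
  simp only [euler, faces, hW, h12]
  omega

/-- The (0c)-faces through the color-0 edge at each `w ∈ M` (`c = 1, 2`) have exactly two white
vertices, and the second one does not lie in `S`. -/
def MarkedFacesAvoid (G : CGraph 3) (M S : Set G.W) : Prop :=
  ∀ w ∈ M, ∀ c : Fin 2,
    G.biperm 0 c.succ (G.biperm 0 c.succ w) = w ∧ G.biperm 0 c.succ w ∉ S

theorem MarkedFacesAvoid.mono {G : CGraph 3} {M S S' : Set G.W} (h : G.MarkedFacesAvoid M S')
    (hS : S ⊆ S') : G.MarkedFacesAvoid M S :=
  fun w hw c => (h w hw c).imp_right fun hw' hw'' => hw' (hS hw'')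

theorem MarkedFacesAvoid.connSum {G H : CGraph 3} {M : Set G.W} {N : Set H.W} {x : G.W}
    {y : H.W} (hG : G.MarkedFacesAvoid M (insert x M)) (hx : x ∉ M)
    (hH : H.MarkedFacesAvoid N (insert y N)) (hy : y ∉ N) :
    (G.connSum H x y).MarkedFacesAvoid (Sum.inl '' M ∪ Sum.inr '' N)
      (insert (Sum.inl x) (Sum.inl '' M ∪ Sum.inr '' N)) := by
  rintro w (⟨u, hu, rfl⟩ | ⟨u, hu, rfl⟩) c
  · obtain ⟨hback, hnot⟩ := hG u hu c
    have hux : u ≠ x := fun h => hx (h ▸ hu)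
    simp only [Set.mem_insert_iff, not_or] at hnot
    simp [biperm_connSum_zero_apply G H x y c.succ_ne_zero, swap_apply_of_ne_of_ne, hux, hnot.1,
      hnot.2, hback]
  · obtain ⟨hback, hnot⟩ := hH u hu c
    have huy : u ≠ y := fun h => hy (h ▸ hu)
    simp only [Set.mem_insert_iff, not_or] at hnot
    simp [biperm_connSum_zero_apply G H x y c.succ_ne_zero, swap_apply_of_ne_of_ne, huy, hnot.1,
      hnot.2, hback]

end ConnSum

end CGraph

theorem OGraph.bdryAdj_iff_of_step {D : ℕ} {G : OGraph D} (hinj : Set.InjOn G.σ₀ G.W₀)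
    {c : Fin D} {w w' : G.W} (hw : w ∉ G.W₀) (hstep : G.Step c w w') (hend : G.σ c w' ∉ G.B₀)
    (x : G.B) : G.BdryAdj c w x ↔ x = G.σ c w' := by
  refine ⟨fun ⟨_, hx, u, hpath, hu⟩ => ?_, fun hx => ⟨hw, hx ▸ hend, w', .single hstep, hx.symm⟩⟩
  have hreach (u : G.W) (hpath : Relation.ReflTransGen (G.Step c) w u) : u = w ∨ u = w' := by
    induction hpath with
    | refl => exact .inl rfl
    | tail _ hlast ih =>
      rcases ih with rfl | rfl
      · exact .inr (hinj hlast.1 hstep.1 (hlast.2.2.trans hstep.2.2.symm))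
      · exact absurd hlast.2.1 hend
  rcases hreach u hpath with rfl | rfl
  · exact absurd (hu ▸ hstep.2.1) hx
  · exact hu.symm

namespace CGraph

variable (G : CGraph 3) {b : ℕ} (v : Fin b → G.W)

theorem deleteZero_isProper : (G.deleteZero v).IsProper := by
  refine ⟨fun w hw ⟨i, hi⟩ => hw ⟨i, (G.σ 0).injective hi⟩, fun _ _ _ _ h => (G.σ 0).injective h,
    fun x hx => ⟨(G.σ 0).symm x, ?_, (G.σ 0).apply_symm_apply x⟩⟩
  rintro ⟨i, hi⟩
  exact hx ⟨i, (congrArg (G.σ 0) hi).trans ((G.σ 0).apply_symm_apply x)⟩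

theorem deleteZero_bdryAdj_iff (h : G.MarkedFacesAvoid (Set.range v) (Set.range v)) (c : Fin 2)
    (w : G.W) (x : G.B) : (G.deleteZero v).BdryAdj c w x ↔ ∃ i, w = v i ∧ x = G.σ 0 (v i) := by
  by_cases hw : w ∉ Set.range v
  · exact iff_of_false (fun hadj => hadj.1 hw) (fun ⟨i, hi, _⟩ => hw ⟨i, hi.symm⟩)
  obtain ⟨i, rfl⟩ := not_not.mp hw
  obtain ⟨hback, hnot⟩ := h _ ⟨i, rfl⟩ c
  set w' := G.biperm 0 c.succ (v i)
  have hσ0 : G.σ 0 w' = G.σ c.succ (v i) := by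
    rw [← hback]; simp [biperm, w']
  have hσc : G.σ c.succ w' = G.σ 0 (v i) := by simp [biperm, w']
  have hmem : G.σ 0 (v i) ∈ Set.range fun j => G.σ 0 (v j) := ⟨i, rfl⟩
  refine (OGraph.bdryAdj_iff_of_step (G := G.deleteZero v) (w := v i) (w' := w')
    (fun _ _ _ _ he => (G.σ 0).injective he) (not_not.mpr ⟨i, rfl⟩) ⟨hnot, ?_, hσ0⟩
    (not_not.mpr (hσc ▸ hmem)) x).trans ?_
  · rintro ⟨j, hj⟩
    exact hnot ⟨j, (G.σ 0).injective (hj.trans hσ0.symm)⟩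
  · refine ⟨fun hx => ⟨i, rfl, hx.trans hσc⟩, fun ⟨j, hj, hx⟩ => hx.trans ?_⟩
    rw [← hj, ← hσc]; rfl

end CGraph

namespace CGraph

open Equiv Equiv.Perm

abbrev ofTranslations {D : ℕ} (A : Type) [AddCommGroup A] [Finite A] (s : Fin D → A) :
    CGraph D where
  W := A
  B := A
  finW := inferInstance
  finB := inferInstance
  σ c := Equiv.addRight (s c)

section OfTranslations

variable {D : ℕ} {A : Type} [AddCommGroup A] [Finite A] (s : Fin D → A)

theorem biperm_ofTranslations (c d : Fin D) :
    (ofTranslations A s).biperm c d = Equiv.addRight (s c - s d) := by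
  ext w
  simp [biperm, sub_eq_add_neg, add_assoc]

theorem involutive_biperm_ofTranslations {c d : Fin D} (h : s c - s d + (s c - s d) = 0) :
    Function.Involutive ((ofTranslations A s).biperm c d) := fun w => by
  rw [biperm_ofTranslations]
  simp [add_assoc, h]

theorem biperm_ofTranslations_ne {c d : Fin D} (h : s c ≠ s d) (w : A) :
    (ofTranslations A s).biperm c d w ≠ w := by
  rw [biperm_ofTranslations]
  simpa [sub_eq_zero] using h

theorem connected_ofTranslations
    (h : AddSubmonoid.closure (Set.range fun p : Fin D × Fin D => s p.1 - s p.2) = ⊤) :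
    (ofTranslations A s).Connected := by
  have hlink {z : A} (hz : z ∈ AddSubmonoid.closure (Set.range fun p : Fin D × Fin D =>
      s p.1 - s p.2)) (u : A) : (ofTranslations A s).Linked u (u + z) := by
    induction hz using AddSubmonoid.closure_induction generalizing u with
    | mem z hz =>
      obtain ⟨⟨c, d⟩, rfl⟩ := hz
      have := Linked.of_sameCycle (G := ofTranslations A s) (c := c) (d := d)
        (sameCycle_apply_right.mpr (.refl _ u))
      rwa [biperm_ofTranslations] at this
    | zero => simpa using Linked.refl (G := ofTranslations A s) u
    | add z z' _ _ ih ih' => simpa [add_assoc] using (ih u).trans (ih' (u + z))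
  intro v w
  have := hlink (h ▸ AddSubmonoid.mem_top (w - v)) v
  rwa [add_sub_cancel] at this

theorem euler_ofTranslations (s : Fin 3 → A) :
    (ofTranslations A s).euler = numCycles (Equiv.addRight (s 0 - s 1)) +
      numCycles (Equiv.addRight (s 0 - s 2)) + numCycles (Equiv.addRight (s 1 - s 2)) -
        (Nat.card A : ℤ) := by
  simp only [euler, faces, biperm_ofTranslations]
  push_cast
  ring

end OfTranslations

-- The three face permutations are translations by the three elements of order 2, so
-- `χ = 2 + 2 + 2 - 4`.
abbrev sphere : CGraph 3 := ofTranslations (ZMod 2 × ZMod 2) ![(0, 1), 0, (1, 0)]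

-- The face permutations are translations by `1`, `-1` and `2`, so `χ = 1 + 1 + 2 - 4`.
abbrev torus : CGraph 3 := ofTranslations (ZMod 4) ![1, 0, 2]

theorem connected_sphere : sphere.Connected := by
  refine connected_ofTranslations _ (eq_top_iff.mpr fun z _ => ?_)
  obtain ⟨m, n, rfl⟩ := (by decide : ∀ z : ZMod 2 × ZMod 2,
    ∃ m n : Fin 2, z = (m : ℕ) • ((0, 1) : ZMod 2 × ZMod 2) + (n : ℕ) • (1, 0)) z
  refine add_mem (nsmul_mem ?_ _) (nsmul_mem ?_ _)
  · exact AddSubmonoid.subset_closure ⟨(0, 1), by simp⟩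
  · exact AddSubmonoid.subset_closure ⟨(2, 1), by simp⟩

theorem connected_torus : torus.Connected := by
  refine connected_ofTranslations _ (eq_top_iff.mpr fun z _ => ?_)
  rw [← ZMod.natCast_zmod_val z, ← nsmul_one]
  refine nsmul_mem ?_ _
  exact AddSubmonoid.subset_closure ⟨(0, 1), by simp⟩

theorem euler_sphere : sphere.euler = 2 := by
  have h01 := numCycles_addRight_mul_eq_card (a := ((0, 1) : ZMod 2 × ZMod 2)) two_pos
    (by decide)
  have h02 := numCycles_addRight_mul_eq_card (a := ((0, 1) - (1, 0) : ZMod 2 × ZMod 2)) two_pos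
    (by decide)
  have h12 := numCycles_addRight_mul_eq_card (a := (0 - (1, 0) : ZMod 2 × ZMod 2)) two_pos
    (by decide)
  simp only [Nat.card_prod, Nat.card_zmod] at h01 h02 h12
  rw [euler_ofTranslations]
  simp only [Nat.card_prod, Nat.card_zmod, Matrix.cons_val_zero, Matrix.cons_val_one,
    Matrix.cons_val_two, Matrix.head_cons, Matrix.tail_cons, sub_zero]
  omega

theorem euler_torus : torus.euler = 0 := by
  have h01 := numCycles_addRight_mul_eq_card (a := (1 : ZMod 4)) four_pos (by decide)
  have h02 := numCycles_addRight_mul_eq_card (a := (1 - 2 : ZMod 4)) four_pos (by decide)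
  have h12 := numCycles_addRight_mul_eq_card (a := (0 - 2 : ZMod 4)) two_pos (by decide)
  simp only [Nat.card_zmod] at h01 h02 h12
  rw [euler_ofTranslations]
  simp only [Nat.card_zmod, Matrix.cons_val_zero, Matrix.cons_val_one,
    Matrix.cons_val_two, Matrix.head_cons, Matrix.tail_cons, sub_zero]
  omega

end CGraph

open CGraph

/-- `x₀` is the unmarked color-0 edge along which further connected sums are taken. -/
def QuarticRealizable (χ : ℤ) (b : ℕ) : Prop :=
  ∃ (G : CGraph 3) (M : Set G.W) (x₀ : G.W), G.Connected ∧
    Function.Involutive (G.biperm 1 2) ∧ (∀ w, G.biperm 1 2 w ≠ w) ∧ G.euler = χ ∧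
    M.ncard = b ∧ x₀ ∉ M ∧ G.MarkedFacesAvoid M (insert x₀ M)

theorem QuarticRealizable.connSum {χ χ' : ℤ} {b b' : ℕ} (h : QuarticRealizable χ b)
    (h' : QuarticRealizable χ' b') : QuarticRealizable (χ + χ' - 2) (b + b') := by
  obtain ⟨G, M, x, hG, hinvG, hfreeG, rfl, rfl, hx, hMG⟩ := h
  obtain ⟨H, N, y, hH, hinvH, hfreeH, rfl, rfl, hy, hMH⟩ := h'
  have := G.finW; have := H.finW
  have h12 := biperm_connSum_of_ne_zero G H x y (c := 1) (d := 2) (by decide) (by decide)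
  refine ⟨G.connSum H x y, Sum.inl '' M ∪ Sum.inr '' N, Sum.inl x, hG.connSum hH x y, ?_, ?_,
    euler_connSum G H x y, ?_, ?_, hMG.connSum hx hMH hy⟩
  · rw [h12]
    rintro (u | u)
    exacts [congrArg Sum.inl (hinvG u), congrArg Sum.inr (hinvH u)]
  · rw [h12]
    rintro (u | u)
    exacts [fun h => hfreeG u (Sum.inl_injective h), fun h => hfreeH u (Sum.inr_injective h)]
  · rw [Set.ncard_union_eq (Set.disjoint_left.mpr (by simp)),
      Set.ncard_image_of_injective _ Sum.inl_injective,
      Set.ncard_image_of_injective _ Sum.inr_injective]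
  · rintro (⟨u, hu, he⟩ | ⟨u, -, he⟩)
    · exact hx (Sum.inl_injective he ▸ hu)
    · exact Sum.inr_ne_inl he

theorem quarticRealizable_sphere : QuarticRealizable 2 0 :=
  ⟨sphere, ∅, 0, connected_sphere, involutive_biperm_ofTranslations _ (by decide),
    biperm_ofTranslations_ne _ (by decide), euler_sphere, Set.ncard_empty _, Set.notMem_empty _,
    fun _ hw => absurd hw (Set.notMem_empty _)⟩

theorem quarticRealizable_torus : QuarticRealizable 0 0 :=
  ⟨torus, ∅, 0, connected_torus, involutive_biperm_ofTranslations _ (by decide),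
    biperm_ofTranslations_ne _ (by decide), euler_torus, Set.ncard_empty _, Set.notMem_empty _,
    fun _ hw => absurd hw (Set.notMem_empty _)⟩

theorem quarticRealizable_disc : QuarticRealizable 2 1 := by
  refine ⟨sphere, {0}, (1, 0), connected_sphere, involutive_biperm_ofTranslations _ (by decide),
    biperm_ofTranslations_ne _ (by decide), euler_sphere, Set.ncard_singleton _, by decide, ?_⟩
  rintro w rfl c
  fin_cases c <;> simp [biperm_ofTranslations] <;> decide

theorem quarticRealizable (g b : ℕ) : QuarticRealizable (2 - 2 * g) b := by
  induction g with
  | zero =>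
    induction b with
    | zero => simpa using quarticRealizable_sphere
    | succ b ih => simpa using ih.connSum quarticRealizable_disc
  | succ g ih =>
    convert ih.connSum quarticRealizable_torus using 1 <;> push_cast <;> ring

theorem Set.exists_fin_injective_range_eq {α : Type*} [Finite α] (M : Set α) :
    ∃ v : Fin M.ncard → α, Function.Injective v ∧ Set.range v = M := by
  rw [← Nat.card_coe_set_eq]
  exact ⟨Subtype.val ∘ (Finite.equivFin M).symm, Subtype.val_injective.comp (Equiv.injective _),
    by rw [Set.range_comp, Equiv.range_eq_univ, Set.image_univ, Subtype.range_coe]⟩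

theorem quartic_matrix_model_generates_all_bordisms (g : ℤ) (hg : 0 ≤ g) (b : ℕ) :
    ∃ (G : CGraph 3) (v : Fin b → G.W),
      G.Connected ∧ G.QuarticFeynman ∧ G.euler = 2 - 2 * g ∧
      Function.Injective v ∧
      (G.deleteZero v).IsProper ∧
      (∀ (c : Fin 2) (w : G.W) (x : G.B),
        (G.deleteZero v).BdryAdj c w x ↔ ∃ i : Fin b, w = v i ∧ x = G.σ 0 (v i)) := by
  lift g to ℕ using hg
  obtain ⟨G, M, x₀, hconn, hinv, hfree, heuler, rfl, -, hmarks⟩ := quarticRealizable g b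
  have := G.finW
  obtain ⟨v, hv, hrange⟩ := Set.exists_fin_injective_range_eq M
  rw [← hrange] at hmarks
  exact ⟨G, v, hconn, quarticFeynman_of_involutive hinv hfree, heuler, hv,
    deleteZero_isProper G v, deleteZero_bdryAdj_iff G v (hmarks.mono (Set.subset_insert _ _))⟩
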